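/- arXiv:2407.19455 — 2 statements merged into one kernel-verified Lean document; each statement's English description precedes it below -/
import Mathlib

section
/- Let X and Y be finite-dimensional Banach spaces over K (ℝ or ℂ) with dim X = n and dim Y = m. Let T ∈ L(X,Y) with ‖T‖ = 1 be an operator of rank 1 such that T(M_T) = {λy : |λ| = 1} for some unit vector y ∈ Y. If the linear span of M_T has dimension n and y is m-smooth, then T is an extreme point of the closed unit ball of L(X,Y). -/
open Metric Set
open scoped ENNReal

noncomputable section

/-- The set `J(x)` of support functionals at `x`: norm-one functionals with `f x = 1`. -/
def suppFunctionals (𝕜 : Type*) [RCLike 𝕜] {X : Type*} [NormedAddCommGroup X]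
    [NormedSpace 𝕜 X] (x : X) : Set (StrongDual 𝕜 X) :=
  {f | ‖f‖ = 1 ∧ f x = 1}

/-- `x` is `k`-smooth: the span of its support functionals has dimension `k`. -/
def IsKSmooth (𝕜 : Type*) [RCLike 𝕜] {X : Type*} [NormedAddCommGroup X]
    [NormedSpace 𝕜 X] (x : X) (k : ℕ) : Prop :=
  Module.rank 𝕜 ↥(Submodule.span 𝕜 (suppFunctionals 𝕜 x)) = k

/-- Extreme points of a set `A` (real convex combinations, scalars embedded in `𝕜`). -/
def ExtremePts (𝕜 : Type*) [RCLike 𝕜] {X : Type*} [NormedAddCommGroup X]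
    [NormedSpace 𝕜 X] (A : Set X) : Set X :=
  {z | z ∈ A ∧ ∀ x ∈ A, ∀ y ∈ A, ∀ t : ℝ, 0 < t → t < 1 →
    z = ((1 - t : ℝ) : 𝕜) • x + ((t : ℝ) : 𝕜) • y → x = z ∧ y = z}

/-- A strictly convex space: every unit vector is an extreme point of the closed unit ball. -/
def StrictlyConvexSp (𝕜 : Type*) [RCLike 𝕜] (X : Type*) [NormedAddCommGroup X]
    [NormedSpace 𝕜 X] : Prop :=
  ∀ x : X, ‖x‖ = 1 → x ∈ ExtremePts 𝕜 (closedBall (0 : X) 1)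

/-- A smooth space: every unit vector has a unique support functional. -/
def SmoothSp (𝕜 : Type*) [RCLike 𝕜] (X : Type*) [NormedAddCommGroup X]
    [NormedSpace 𝕜 X] : Prop :=
  ∀ x : X, ‖x‖ = 1 → ∃ f, suppFunctionals 𝕜 x = {f}

/-- Birkhoff–James orthogonality: `x ⊥_B y` iff `‖x + c • y‖ ≥ ‖x‖` for all scalars `c`. -/
def BJOrtho (𝕜 : Type*) [RCLike 𝕜] {X : Type*} [NormedAddCommGroup X]
    [NormedSpace 𝕜 X] (x y : X) : Prop :=
  ∀ c : 𝕜, ‖x‖ ≤ ‖x + c • y‖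

/-- The norm attainment set `M_T` of an operator `T`. -/
def normAttainSet (𝕜 : Type*) [RCLike 𝕜] {X Y : Type*} [NormedAddCommGroup X]
    [NormedSpace 𝕜 X] [NormedAddCommGroup Y] [NormedSpace 𝕜 Y] (T : X →L[𝕜] Y) : Set X :=
  {x | ‖x‖ = 1 ∧ ‖T x‖ = ‖T‖}

/-- `V` is an M-ideal in `Z`: the dual of `Z` splits as an ℓ¹ direct sum of a closed
subspace `S` and the annihilator of `V`. -/
def IsMIdeal (𝕜 : Type*) [RCLike 𝕜] {Z : Type*} [NormedAddCommGroup Z]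
    [NormedSpace 𝕜 Z] (V : Submodule 𝕜 Z) : Prop :=
  IsClosed (V : Set Z) ∧
  ∃ S : Submodule 𝕜 (StrongDual 𝕜 Z), IsClosed (S : Set (StrongDual 𝕜 Z)) ∧
    ∀ f : StrongDual 𝕜 Z,
      (∃! gh : StrongDual 𝕜 Z × StrongDual 𝕜 Z,
        gh.1 ∈ S ∧ (∀ v ∈ V, gh.2 v = 0) ∧ f = gh.1 + gh.2) ∧
      (∀ g h : StrongDual 𝕜 Z, g ∈ S → (∀ v ∈ V, h v = 0) → f = g + h →
        ‖f‖ = ‖g‖ + ‖h‖)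

/-- The subspace of compact operators in `L(X,Y)`. -/
def compactOperators (𝕜 : Type*) [RCLike 𝕜] (X Y : Type*) [NormedAddCommGroup X]
    [NormedSpace 𝕜 X] [NormedAddCommGroup Y] [NormedSpace 𝕜 Y] :
    Submodule 𝕜 (X →L[𝕜] Y) where
  carrier := {T | IsCompactOperator T}
  add_mem' := fun h1 h2 => h1.add h2
  zero_mem' := isCompactOperator_zero
  smul_mem' := fun c _ h => h.smul c

/-- A reflexive space: the canonical embedding into the double dual is surjective. -/
def ReflexiveSp (𝕜 : Type*) [RCLike 𝕜] (X : Type*) [NormedAddCommGroup X]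
    [NormedSpace 𝕜 X] : Prop :=
  Function.Surjective (NormedSpace.inclusionInDoubleDual 𝕜 X)

/-- A coproximinal subspace: every point has a best coapproximation out of `V`. -/
def Coproximinal (𝕜 : Type*) [RCLike 𝕜] {Y : Type*} [NormedAddCommGroup Y]
    [NormedSpace 𝕜 Y] (V : Submodule 𝕜 Y) : Prop :=
  ∀ y : Y, ∃ y₀ ∈ V, ∀ z ∈ V, ‖y₀ - z‖ ≤ ‖y - z‖

/-- The functional `y* ⊗ x` on `L(X,Y)` given by `A ↦ y*(A x)`. -/
def tensorFunctional (𝕜 : Type*) [RCLike 𝕜] {X Y : Type*} [NormedAddCommGroup X]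
    [NormedSpace 𝕜 X] [NormedAddCommGroup Y] [NormedSpace 𝕜 Y]
    (f : StrongDual 𝕜 Y) (x : X) : StrongDual 𝕜 (X →L[𝕜] Y) :=
  f.comp (ContinuousLinearMap.apply 𝕜 Y x)

/-- The set of support functionals of images `Tx` for `x ∈ R ∩ Ext(B_X)`. -/
def suppOfImage (𝕜 : Type*) [RCLike 𝕜] {X Y : Type*} [NormedAddCommGroup X]
    [NormedSpace 𝕜 X] [NormedAddCommGroup Y] [NormedSpace 𝕜 Y]
    (T : X →L[𝕜] Y) (R : Set X) : Set (StrongDual 𝕜 Y) :=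
  {f | ∃ x ∈ R ∩ ExtremePts 𝕜 (closedBall (0 : X) 1), f ∈ suppFunctionals 𝕜 (T x)}

/-- The subspace `Z ⊆ 𝕜^{np}` from the definition of the index of smoothness, relative to
bases `v` of `span R` and `w` of `W`. -/
def indexSubspace (𝕜 : Type*) [RCLike 𝕜] {X Y : Type*} [NormedAddCommGroup X]
    [NormedSpace 𝕜 X] [NormedAddCommGroup Y] [NormedSpace 𝕜 Y]
    (T : X →L[𝕜] Y) (R : Set X) {n p : ℕ} (v : Fin n → X)
    (w : Fin p → StrongDual 𝕜 Y) : Submodule 𝕜 (Fin n × Fin p → 𝕜) :=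
  Submodule.span 𝕜 {z | ∃ (α : Fin n → 𝕜) (β : Fin p → 𝕜),
    (∑ i, α i • v i) ∈ R ∩ ExtremePts 𝕜 (closedBall (0 : X) 1) ∧
    (∑ j, β j • w j) ∈ ExtremePts 𝕜 (suppFunctionals 𝕜 (T (∑ i, α i • v i))) ∧
    z = fun ij => α ij.1 * β ij.2}

/-- `v` is a basis of the span of the set `R`. -/
def IsBasisOfSpan (𝕜 : Type*) [RCLike 𝕜] {E : Type*} [AddCommGroup E] [Module 𝕜 E]
    {n : ℕ} (v : Fin n → E) (R : Set E) : Prop :=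
  LinearIndependent 𝕜 v ∧ Submodule.span 𝕜 (Set.range v) = Submodule.span 𝕜 R

/-- The index of smoothness of `T` with respect to `R` equals `k`: for every choice of bases
of `span R` and of `W`, the corresponding subspace `Z` has dimension `k`. -/
def HasIndexOfSmoothness (𝕜 : Type*) [RCLike 𝕜] {X Y : Type*} [NormedAddCommGroup X]
    [NormedSpace 𝕜 X] [NormedAddCommGroup Y] [NormedSpace 𝕜 Y]
    (T : X →L[𝕜] Y) (R : Set X) (k : ℕ) : Prop :=
  ∀ (n p : ℕ) (v : Fin n → X) (w : Fin p → StrongDual 𝕜 Y),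
    IsBasisOfSpan 𝕜 v R → IsBasisOfSpan 𝕜 w (suppOfImage 𝕜 T R) →
      Module.finrank 𝕜 ↥(indexSubspace 𝕜 T R v w) = k

/-- A polyhedral finite-dimensional real space: the unit ball has finitely many
extreme points. -/
def PolyhedralSp (X : Type*) [NormedAddCommGroup X] [NormedSpace ℝ X] : Prop :=
  (ExtremePts ℝ (closedBall (0 : X) 1)).Finite

/-- A face of the unit ball of a real space. -/
def IsFaceOfBall {X : Type*} [NormedAddCommGroup X] [NormedSpace ℝ X] (F : Set X) : Prop :=
  (∀ x ∈ F, ‖x‖ = 1) ∧ Convex ℝ F ∧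
  ∀ x₁ x₂ : X, ‖x₁‖ = 1 → ‖x₂‖ = 1 → ∀ t : ℝ, 0 < t → t < 1 →
    (1 - t) • x₁ + t • x₂ ∈ F → x₁ ∈ F ∧ x₂ ∈ F

/-- The dimension of a face: the dimension of the span of differences of its elements. -/
def faceDim {X : Type*} [NormedAddCommGroup X] [NormedSpace ℝ X] (F : Set X) : ℕ :=
  Module.finrank ℝ ↥(Submodule.span ℝ {d : X | ∃ v ∈ F, ∃ w ∈ F, d = v - w})

/-- `u` is a strong Auerbach basis of the subspace `V`. -/
def IsStrongAuerbachBasis (𝕜 : Type*) [RCLike 𝕜] {Y : Type*} [NormedAddCommGroup Y]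
    [NormedSpace 𝕜 Y] {d : ℕ} (u : Fin d → Y) (V : Submodule 𝕜 Y) : Prop :=
  (∀ i, u i ∈ V) ∧ (∀ i, ‖u i‖ = 1) ∧ LinearIndependent 𝕜 u ∧
  Submodule.span 𝕜 (Set.range u) = V ∧
  ∀ C : Set (Fin d), ∀ a ∈ Submodule.span 𝕜 (u '' C), ∀ b ∈ Submodule.span 𝕜 (u '' Cᶜ),
    BJOrtho 𝕜 a b

end

/-! If `T = (1 - t) A + t B` with `A`, `B` in the unit ball and `x ∈ M_T`, then every support
functional at `T x` is a norm-one functional on `L(X, Y)` (via `C ↦ g (C x)`) peaking at a convex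
combination of `A` and `B`, so it also supports `A x` and `B x`. Writing `T x = c • y` with
`|c| = 1`, the support functionals at `T x` are the `c⁻¹ • f`, `f ∈ J(y)`, and `J(y)` spans `Y*`
because `y` is `m`-smooth; hence `A x = B x = T x`. Since `M_T` spans `X`, `A = B = T`. -/

section

variable {𝕜 : Type*} [RCLike 𝕜]

theorem RCLike.eq_one_and_eq_one_of_convexComb_eq_one {a b : 𝕜} {t : ℝ}
    (ha : ‖a‖ ≤ 1) (hb : ‖b‖ ≤ 1) (ht0 : 0 < t) (ht1 : t < 1)
    (h : ((1 - t : ℝ) : 𝕜) * a + ((t : ℝ) : 𝕜) * b = 1) : a = 1 ∧ b = 1 := by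
  have hre := congrArg RCLike.re h
  simp only [map_add, RCLike.re_ofReal_mul, RCLike.one_re] at hre
  have hra : RCLike.re a ≤ 1 := (RCLike.re_le_norm a).trans ha
  have hrb : RCLike.re b ≤ 1 := (RCLike.re_le_norm b).trans hb
  have eq_one_of_re {z : 𝕜} (hz : ‖z‖ ≤ 1) (hz1 : RCLike.re z = 1) : z = 1 := by
    simpa [hz1] using (RCLike.re_eq_self_of_le (a := z) (by rw [hz1]; exact hz)).symm
  exact ⟨eq_one_of_re ha (by nlinarith), eq_one_of_re hb (by nlinarith)⟩

theorem StrongDual.apply_eq_one_of_apply_convexComb_eq_one {Z : Type*} [NormedAddCommGroup Z]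
    [NormedSpace 𝕜 Z] {φ : StrongDual 𝕜 Z} (hφ : ‖φ‖ ≤ 1) {a b : Z} (ha : ‖a‖ ≤ 1)
    (hb : ‖b‖ ≤ 1) {t : ℝ} (ht0 : 0 < t) (ht1 : t < 1)
    (h : φ (((1 - t : ℝ) : 𝕜) • a + ((t : ℝ) : 𝕜) • b) = 1) : φ a = 1 ∧ φ b = 1 := by
  have hle {z : Z} (hz : ‖z‖ ≤ 1) : ‖φ z‖ ≤ 1 :=
    (φ.le_opNorm z).trans (by nlinarith [norm_nonneg φ, norm_nonneg z])
  simp only [map_add, map_smul, smul_eq_mul] at h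
  exact RCLike.eq_one_and_eq_one_of_convexComb_eq_one (hle ha) (hle hb) ht0 ht1 h

section Operators

variable {X Y : Type*} [NormedAddCommGroup X] [NormedSpace 𝕜 X]
  [NormedAddCommGroup Y] [NormedSpace 𝕜 Y]

theorem norm_tensorFunctional_le (f : StrongDual 𝕜 Y) (x : X) :
    ‖tensorFunctional 𝕜 f x‖ ≤ ‖f‖ * ‖x‖ :=
  ContinuousLinearMap.opNorm_le_bound _ (by positivity) fun A =>
    calc ‖f (A x)‖ ≤ ‖f‖ * (‖A‖ * ‖x‖) :=
          (f.le_opNorm _).trans (mul_le_mul_of_nonneg_left (A.le_opNorm x) (norm_nonneg f))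
      _ = ‖f‖ * ‖x‖ * ‖A‖ := by ring

theorem apply_eq_one_of_mem_suppFunctionals_convexComb {A B : X →L[𝕜] Y}
    (hA : ‖A‖ ≤ 1) (hB : ‖B‖ ≤ 1) {t : ℝ} (ht0 : 0 < t) (ht1 : t < 1) {x : X} (hx : ‖x‖ = 1)
    {g : StrongDual 𝕜 Y}
    (hg : g ∈ suppFunctionals 𝕜 ((((1 - t : ℝ) : 𝕜) • A + ((t : ℝ) : 𝕜) • B) x)) :
    g (A x) = 1 ∧ g (B x) = 1 :=
  StrongDual.apply_eq_one_of_apply_convexComb_eq_one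
    ((norm_tensorFunctional_le g x).trans_eq (by rw [hg.1, hx, one_mul])) hA hB ht0 ht1 hg.2

end Operators

section Smoothness

variable {Y : Type*} [NormedAddCommGroup Y] [NormedSpace 𝕜 Y]

theorem inv_smul_mem_suppFunctionals_smul {y : Y} {c : 𝕜} (hc : ‖c‖ = 1)
    {f : StrongDual 𝕜 Y} (hf : f ∈ suppFunctionals 𝕜 y) :
    c⁻¹ • f ∈ suppFunctionals 𝕜 (c • y) := by
  have hc0 : c ≠ 0 := norm_ne_zero_iff.mp (by rw [hc]; exact one_ne_zero)
  refine ⟨by rw [norm_smul, norm_inv, hc, hf.1, inv_one, one_mul], ?_⟩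
  simp [hf.2, hc0]

theorem span_suppFunctionals_eq_top [FiniteDimensional 𝕜 Y] {y : Y}
    (hy : IsKSmooth 𝕜 y (Module.finrank 𝕜 Y)) :
    Submodule.span 𝕜 (suppFunctionals 𝕜 y) = ⊤ := by
  apply Submodule.eq_top_of_finrank_eq
  rw [Module.finrank_eq_of_rank_eq hy, ← Subspace.dual_finrank_eq]
  exact (LinearMap.toContinuousLinearMap : Module.Dual 𝕜 Y ≃ₗ[𝕜] StrongDual 𝕜 Y).finrank_eq

theorem eq_smul_of_forall_mem_suppFunctionals_smul {y v : Y} {c : 𝕜}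
    (hJ : Submodule.span 𝕜 (suppFunctionals 𝕜 y) = ⊤) (hc : ‖c‖ = 1)
    (hv : ∀ g ∈ suppFunctionals 𝕜 (c • y), g v = 1) : v = c • y := by
  have hc0 : c ≠ 0 := norm_ne_zero_iff.mp (by rw [hc]; exact one_ne_zero)
  have hagree : Set.EqOn (ContinuousLinearMap.apply 𝕜 𝕜 v : StrongDual 𝕜 Y →ₗ[𝕜] 𝕜)
      (ContinuousLinearMap.apply 𝕜 𝕜 (c • y) : StrongDual 𝕜 Y →ₗ[𝕜] 𝕜)
      (suppFunctionals 𝕜 y) := by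
    intro f hf
    have hfv := hv _ (inv_smul_mem_suppFunctionals_smul hc hf)
    simp only [FunLike.coe_smul, Pi.smul_apply, smul_eq_mul] at hfv
    simp [map_smul, hf.2, (inv_mul_eq_one₀ hc0).mp hfv]
  rw [SeparatingDual.eq_iff_forall_dual_eq (R := 𝕜)]
  exact fun g => LinearMap.congr_fun (LinearMap.ext_on hJ hagree) g

end Smoothness

end

theorem rank_one_extreme_contraction_general
    {𝕜 X Y : Type*} [RCLike 𝕜]
    [NormedAddCommGroup X] [NormedSpace 𝕜 X] [FiniteDimensional 𝕜 X]
    [NormedAddCommGroup Y] [NormedSpace 𝕜 Y] [FiniteDimensional 𝕜 Y]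
    {n m : ℕ} (hdimX : Module.finrank 𝕜 X = n) (hdimY : Module.finrank 𝕜 Y = m)
    (T : X →L[𝕜] Y) (hT : ‖T‖ = 1)
    (y : Y)
    (hTM : T '' normAttainSet 𝕜 T = {z : Y | ∃ c : 𝕜, ‖c‖ = 1 ∧ z = c • y})
    (hspan : Module.finrank 𝕜 ↥(Submodule.span 𝕜 (normAttainSet 𝕜 T)) = n)
    (hsm : IsKSmooth 𝕜 y m) :
    T ∈ ExtremePts 𝕜 (closedBall (0 : X →L[𝕜] Y) 1) := by
  subst hdimX hdimY
  have hJ := span_suppFunctionals_eq_top hsm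
  have hM : Dense (Submodule.span 𝕜 (normAttainSet 𝕜 T) : Set X) := by
    rw [Submodule.eq_top_of_finrank_eq hspan]
    exact dense_univ
  refine ⟨by simp [hT], fun A hA B hB t ht0 ht1 hconv => ?_⟩
  rw [mem_closedBall_zero_iff] at hA hB
  have hagree : ∀ x ∈ normAttainSet 𝕜 T, A x = T x ∧ B x = T x := by
    intro x hx
    obtain ⟨c, hc, hTx⟩ := hTM.subset (mem_image_of_mem T hx)
    have hpeak g (hg : g ∈ suppFunctionals 𝕜 (c • y)) :=
      apply_eq_one_of_mem_suppFunctionals_convexComb hA hB ht0 ht1 hx.1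
        (by rwa [← hconv, hTx])
    rw [hTx]
    exact ⟨eq_smul_of_forall_mem_suppFunctionals_smul hJ hc fun g hg => (hpeak g hg).1,
      eq_smul_of_forall_mem_suppFunctionals_smul hJ hc fun g hg => (hpeak g hg).2⟩
  exact ⟨ContinuousLinearMap.ext_on hM fun x hx => (hagree x hx).1,
    ContinuousLinearMap.ext_on hM fun x hx => (hagree x hx).2⟩

theorem rank_one_extreme_contraction
    {𝕜 X Y : Type*} [RCLike 𝕜]
    [NormedAddCommGroup X] [NormedSpace 𝕜 X] [FiniteDimensional 𝕜 X]
    [NormedAddCommGroup Y] [NormedSpace 𝕜 Y] [FiniteDimensional 𝕜 Y]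
    {n m : ℕ} (hdimX : Module.finrank 𝕜 X = n) (hdimY : Module.finrank 𝕜 Y = m)
    (T : X →L[𝕜] Y) (hT : ‖T‖ = 1)
    (hrank : Module.finrank 𝕜 ↥(LinearMap.range (T : X →ₗ[𝕜] Y)) = 1)
    (y : Y) (hy : ‖y‖ = 1)
    (hTM : T '' normAttainSet 𝕜 T = {z : Y | ∃ c : 𝕜, ‖c‖ = 1 ∧ z = c • y})
    (hspan : Module.finrank 𝕜 ↥(Submodule.span 𝕜 (normAttainSet 𝕜 T)) = n)
    (hsm : IsKSmooth 𝕜 y m) :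
    T ∈ ExtremePts 𝕜 (closedBall (0 : X →L[𝕜] Y) 1) :=
  rank_one_extreme_contraction_general hdimX hdimY T hT y hTM hspan hsm
end

section
/- Let X and Y be strictly convex, smooth, reflexive Banach spaces over the same field K (ℝ or ℂ). Let T ∈ L(X,Y) with ‖T‖ = 1, suppose the subspace K(X,Y) of compact operators is an M-ideal in L(X,Y), and dist(T, K(X,Y)) < 1. Suppose M_T is the unit sphere of an n-dimensional subspace X₀ of X, T(X₀) is a coproximinal subspace of Y, and T(X₀) has a strong Auerbach basis. Then T is at least (n+1 choose 2)-smooth, i.e., the dimension of the linear span of J(T) is at least n(n+1)/2. -/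
open Metric Set
open scoped ENNReal

/-!
Since `M_T` is the unit sphere of `X₀`, the operator `T` is isometric on `X₀`, so the strong
Auerbach basis `u₁, …, uₙ` of `T(X₀)` lifts to `xᵢ ∈ X₀` with `‖xᵢ + xⱼ‖ = ‖uᵢ + uⱼ‖`. For each
pair `{i, j}`, `uᵢ + uⱼ` is Birkhoff–James orthogonal to the span of the other `u_l`, so
Hahn–Banach on the quotient by that span gives `g` with `g (uᵢ + uⱼ) = 1`,
`‖g‖ ‖uᵢ + uⱼ‖ ≤ 1` and `g u_l = 0` for `l ∉ {i, j}`; then `A ↦ g (A (xᵢ + xⱼ))` lies in `J(T)`.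
Evaluated on the rank-one operators `(φₖ ∘ T) ⊗ u_l`, where `φₖ` is biorthogonal to `u`, these
`n(n+1)/2` functionals become matrices supported on `{i, j}²` whose `(i, j)` and `(j, i)`
entries do not sum to zero, and such matrices are linearly independent.
-/

theorem LinearIndependent.card_le_rank_span {K M ι : Type*} [DivisionRing K] [AddCommGroup M]
    [Module K M] [Fintype ι] {F : ι → M} (hF : LinearIndependent K F) {s : Set M}
    (hs : ∀ i, F i ∈ s) : (Fintype.card ι : Cardinal) ≤ Module.rank K (Submodule.span K s) := by
  have := FiniteDimensional.span_of_finite K (Set.finite_range F)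
  calc (Fintype.card ι : Cardinal)
      = Module.finrank K (Submodule.span K (Set.range F)) := by rw [finrank_span_eq_card hF]
    _ = Module.rank K (Submodule.span K (Set.range F)) := Module.finrank_eq_rank _ _
    _ ≤ _ := Submodule.rank_mono (Submodule.span_mono (Set.range_subset_iff.2 hs))

section PairSum

variable {α M : Type*} [AddCommMonoid M]

def pairSum (v : α → M) : Sym2 α → M :=
  Sym2.lift ⟨fun i j => v i + v j, fun _ _ => add_comm _ _⟩

@[simp]
theorem pairSum_mk (v : α → M) (i j : α) : pairSum v s(i, j) = v i + v j := rfl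

theorem map_pairSum {N F : Type*} [AddCommMonoid N] [FunLike F M N] [AddMonoidHomClass F M N]
    (f : F) (v : α → M) (z : Sym2 α) : f (pairSum v z) = pairSum (fun i => f (v i)) z := by
  induction z using Sym2.ind with | h i j => simp

end PairSum

theorem linearIndependent_of_support_sym2 {K α : Type*} [Field K] (m : Sym2 α → α → α → K)
    (hsupp : ∀ z k l, m z k l ≠ 0 → k ∈ z ∧ l ∈ z)
    (hpair : ∀ i j, m s(i, j) i j + m s(i, j) j i ≠ 0) :
    LinearIndependent K m := by
  classical
  rw [linearIndependent_iff']
  intro s c hc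
  have hsum : ∀ i j, ∑ z ∈ s, c z * (m z i j + m z j i) = 0 := fun i j => by
    have h := congrArg (fun M => M i j + M j i) hc
    simpa [Finset.sum_apply, mul_add, Finset.sum_add_distrib] using h
  have hoff : ∀ i j, i ≠ j → s(i, j) ∈ s → c s(i, j) = 0 := by
    intro i j hij hz
    have hzero : ∀ z ∈ s, z ≠ s(i, j) → c z * (m z i j + m z j i) = 0 := by
      intro z _ hz'
      have h1 : m z i j = 0 := by
        by_contra h
        exact hz' ((Sym2.mem_and_mem_iff hij).1 (hsupp _ _ _ h))
      have h2 : m z j i = 0 := by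
        by_contra h
        exact hz' ((Sym2.mem_and_mem_iff hij).1 (hsupp _ _ _ h).symm)
      rw [h1, h2, add_zero, mul_zero]
    have h := hsum i j
    rw [Finset.sum_eq_single_of_mem _ hz hzero] at h
    exact (mul_eq_zero.1 h).resolve_right (hpair i j)
  intro z hz
  induction z using Sym2.ind with | h i j => ?_
  rcases ne_or_eq i j with hij | rfl
  · exact hoff i j hij hz
  have hzero : ∀ z ∈ s, z ≠ s(i, i) → c z * (m z i i + m z i i) = 0 := by
    intro z hz' hne
    induction z using Sym2.ind with | h a b => ?_
    rcases ne_or_eq a b with hab | rfl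
    · rw [hoff a b hab hz', zero_mul]
    have h : m s(a, a) i i = 0 := by
      by_contra h
      obtain rfl : i = a := by simpa using (hsupp _ _ _ h).1
      exact hne rfl
    rw [h, add_zero, mul_zero]
  have h := hsum i i
  rw [Finset.sum_eq_single_of_mem _ hz hzero] at h
  exact (mul_eq_zero.1 h).resolve_right (hpair i i)

section

variable {𝕜 : Type*} [RCLike 𝕜]
  {X : Type*} [NormedAddCommGroup X] [NormedSpace 𝕜 X]
  {Y : Type*} [NormedAddCommGroup Y] [NormedSpace 𝕜 Y]

theorem exists_dual_vector_of_forall_bjOrtho (V : Submodule 𝕜 Y) {w : Y}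
    (hw : ∀ v ∈ V, BJOrtho 𝕜 w v) :
    ∃ g : StrongDual 𝕜 Y, ‖g‖ ≤ 1 ∧ g w = ‖w‖ ∧ ∀ v ∈ V, g v = 0 := by
  have hnorm : ‖(Submodule.Quotient.mk w : Y ⧸ V)‖ = ‖w‖ := by
    refine le_antisymm (Submodule.Quotient.norm_mk_le V w) (QuotientAddGroup.le_norm_iff.2 ?_)
    intro m hm
    obtain ⟨v, hv, rfl⟩ : ∃ v ∈ V, m = w + v :=
      ⟨m - w, (Submodule.Quotient.eq V).1 hm, by abel⟩
    simpa using hw v hv 1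
  obtain ⟨g, hg, hgw⟩ := exists_dual_vector'' 𝕜 (V.mkQ w)
  have hbound : ∀ y, ‖(g.toLinearMap ∘ₗ V.mkQ) y‖ ≤ 1 * ‖y‖ := fun y =>
    calc ‖g (V.mkQ y)‖ ≤ ‖g‖ * ‖(V.mkQ y : Y ⧸ V)‖ := g.le_opNorm _
      _ ≤ 1 * ‖y‖ := by gcongr; exact Submodule.Quotient.norm_mk_le V y
  refine ⟨(g.toLinearMap ∘ₗ V.mkQ).mkContinuous 1 hbound,
    LinearMap.mkContinuous_norm_le _ zero_le_one _, ?_, fun v hv => ?_⟩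
  · simpa [hnorm] using hgw
  · simp [(Submodule.Quotient.mk_eq_zero V).2 hv]

theorem norm_apply_eq_of_sphere_subset_normAttainSet {T : X →L[𝕜] Y} {X₀ : Submodule 𝕜 X}
    (h : ∀ x ∈ X₀, ‖x‖ = 1 → x ∈ normAttainSet 𝕜 T) {x : X} (hx : x ∈ X₀) :
    ‖T x‖ = ‖T‖ * ‖x‖ := by
  rcases eq_or_ne x 0 with rfl | hx0
  · simp
  have hpos : 0 < ‖x‖ := norm_pos_iff.2 hx0
  have hunit : ‖((‖x‖⁻¹ : ℝ) : 𝕜) • x‖ = 1 := by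
    rw [norm_smul, RCLike.norm_ofReal, abs_inv, abs_norm, inv_mul_cancel₀ hpos.ne']
  have hattain := (h _ (X₀.smul_mem _ hx) hunit).2
  rw [map_smul, norm_smul, RCLike.norm_ofReal, abs_inv, abs_norm] at hattain
  field_simp at hattain
  linarith

theorem finrank_map_eq_of_forall_norm_apply_eq {T : X →L[𝕜] Y} {X₀ : Submodule 𝕜 X}
    (h : ∀ x ∈ X₀, ‖T x‖ = ‖x‖) :
    Module.finrank 𝕜 (X₀.map (T : X →ₗ[𝕜] Y)) = Module.finrank 𝕜 X₀ := by
  let L : X₀ →ₗᵢ[𝕜] Y := ⟨(T : X →ₗ[𝕜] Y) ∘ₗ X₀.subtype, fun x => h x x.2⟩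
  rw [← LinearMap.finrank_range_of_inj L.injective]
  change _ = Module.finrank 𝕜 (LinearMap.range ((T : X →ₗ[𝕜] Y) ∘ₗ X₀.subtype))
  rw [LinearMap.range_comp, Submodule.range_subtype]

theorem tensorFunctional_apply (f : StrongDual 𝕜 Y) (x : X) (A : X →L[𝕜] Y) :
    tensorFunctional 𝕜 f x A = f (A x) := rfl

theorem tensorFunctional_mem_suppFunctionals {T : X →L[𝕜] Y} (hT : ‖T‖ ≤ 1)
    {g : StrongDual 𝕜 Y} {x : X} (hgx : ‖g‖ * ‖x‖ ≤ 1) (hgTx : g (T x) = 1) :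
    tensorFunctional 𝕜 g x ∈ suppFunctionals 𝕜 T := by
  have hle : ‖tensorFunctional 𝕜 g x‖ ≤ 1 := by
    refine (ContinuousLinearMap.opNorm_le_bound _ (by positivity) fun A => ?_).trans hgx
    calc ‖g (A x)‖ ≤ ‖g‖ * (‖A‖ * ‖x‖) := g.le_opNorm_of_le (A.le_opNorm x)
      _ = ‖g‖ * ‖x‖ * ‖A‖ := by ring
  refine ⟨le_antisymm hle ?_, hgTx⟩
  calc (1 : ℝ) = ‖tensorFunctional 𝕜 g x T‖ := by rw [tensorFunctional_apply, hgTx, norm_one]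
    _ ≤ ‖tensorFunctional 𝕜 g x‖ * ‖T‖ := ContinuousLinearMap.le_opNorm _ _
    _ ≤ ‖tensorFunctional 𝕜 g x‖ * 1 := by gcongr
    _ = _ := mul_one _

theorem linearIndependent_tensorFunctional_of_sym2 {α : Type*} (h : α → StrongDual 𝕜 X)
    (v : α → Y) (g : Sym2 α → StrongDual 𝕜 Y) (y : Sym2 α → X)
    (hsupp : ∀ z k l, h k (y z) * g z (v l) ≠ 0 → k ∈ z ∧ l ∈ z)
    (hpair : ∀ i j, h i (y s(i, j)) * g s(i, j) (v j) + h j (y s(i, j)) * g s(i, j) (v i) ≠ 0) :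
    LinearIndependent 𝕜 fun z => tensorFunctional 𝕜 (g z) (y z) := by
  let Φ : StrongDual 𝕜 (X →L[𝕜] Y) →ₗ[𝕜] α → α → 𝕜 :=
    { toFun := fun f k l => f ((h k).smulRight (v l))
      map_add' := fun _ _ => rfl
      map_smul' := fun _ _ => rfl }
  refine LinearIndependent.of_comp Φ (linearIndependent_of_support_sym2 _ ?_ ?_)
  · simpa [Φ, tensorFunctional_apply] using hsupp
  · simpa [Φ, tensorFunctional_apply] using hpair

namespace IsStrongAuerbachBasis

variable {d : ℕ} {u : Fin d → Y} {V : Submodule 𝕜 Y}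

theorem finrank_eq (hu : IsStrongAuerbachBasis 𝕜 u V) : Module.finrank 𝕜 V = d := by
  rw [← hu.2.2.2.1, finrank_span_eq_card hu.2.2.1, Fintype.card_fin]

theorem exists_dual_vector (hu : IsStrongAuerbachBasis 𝕜 u V) (C : Set (Fin d)) {w : Y}
    (hw : w ∈ Submodule.span 𝕜 (u '' C)) :
    ∃ g : StrongDual 𝕜 Y, ‖g‖ ≤ 1 ∧ g w = ‖w‖ ∧ ∀ k ∉ C, g (u k) = 0 := by
  obtain ⟨g, hg, hgw, hg0⟩ := exists_dual_vector_of_forall_bjOrtho _ (hu.2.2.2.2 C w hw)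
  exact ⟨g, hg, hgw, fun k hk => hg0 _ (Submodule.subset_span (Set.mem_image_of_mem u hk))⟩

theorem exists_dual_apply_eq_ite (hu : IsStrongAuerbachBasis 𝕜 u V) (k : Fin d) :
    ∃ φ : StrongDual 𝕜 Y, ∀ l, φ (u l) = if l = k then 1 else 0 := by
  obtain ⟨φ, -, hφk, hφ0⟩ :=
    hu.exists_dual_vector {k} (Submodule.subset_span (Set.mem_image_of_mem u rfl))
  refine ⟨φ, fun l => ?_⟩
  split_ifs with hl
  · rw [hl, hφk, hu.2.1 k, RCLike.ofReal_one]
  · exact hφ0 l hl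

theorem add_ne_zero (hu : IsStrongAuerbachBasis 𝕜 u V) (i j : Fin d) : u i + u j ≠ 0 := by
  obtain ⟨φ, hφ⟩ := hu.exists_dual_apply_eq_ite i
  intro h
  have := congrArg φ h
  rw [map_add, hφ, hφ, map_zero, if_pos rfl] at this
  split_ifs at this <;> norm_num at this

theorem exists_dual_pairSum (hu : IsStrongAuerbachBasis 𝕜 u V) (z : Sym2 (Fin d)) :
    ∃ g : StrongDual 𝕜 Y, ‖g‖ * ‖pairSum u z‖ ≤ 1 ∧ g (pairSum u z) = 1 ∧
      ∀ l ∉ z, g (u l) = 0 := by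
  induction z using Sym2.ind with | h i j => ?_
  have hw : 0 < ‖u i + u j‖ := norm_pos_iff.2 (hu.add_ne_zero i j)
  obtain ⟨g, hg, hgw, hg0⟩ := hu.exists_dual_vector {i, j}
    (add_mem (Submodule.subset_span (Set.mem_image_of_mem u (Set.mem_insert i {j})))
      (Submodule.subset_span (Set.mem_image_of_mem u (Set.mem_insert_of_mem i rfl))))
  refine ⟨((‖u i + u j‖⁻¹ : ℝ) : 𝕜) • g, ?_, ?_, fun l hl => ?_⟩
  · rw [pairSum_mk, norm_smul, RCLike.norm_ofReal, abs_inv, abs_norm, mul_comm, ← mul_assoc,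
      mul_inv_cancel₀ hw.ne', one_mul]
    exact hg
  · rw [pairSum_mk, smul_apply, hgw, smul_eq_mul, ← RCLike.ofReal_mul,
      inv_mul_cancel₀ hw.ne', RCLike.ofReal_one]
  · rw [smul_apply, hg0 l (by simpa using hl), smul_zero]

theorem choose_two_le_rank_span_suppFunctionals (hu : IsStrongAuerbachBasis 𝕜 u V)
    {T : X →L[𝕜] Y} (hT : ‖T‖ ≤ 1) {x : Fin d → X} (hTx : ∀ i, T (x i) = u i)
    (hx : ∀ i j, ‖x i + x j‖ ≤ ‖u i + u j‖) :
    ((d + 1).choose 2 : Cardinal) ≤ Module.rank 𝕜 (Submodule.span 𝕜 (suppFunctionals 𝕜 T)) := by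
  classical
  choose φ hφ using hu.exists_dual_apply_eq_ite
  choose g hg hgu hg0 using hu.exists_dual_pairSum
  have hTx' : ∀ z, T (pairSum x z) = pairSum u z := fun z => by simp [map_pairSum, hTx]
  have hF : ∀ z, tensorFunctional 𝕜 (g z) (pairSum x z) ∈ suppFunctionals 𝕜 T := by
    refine fun z => tensorFunctional_mem_suppFunctionals hT ?_ (by rw [hTx', hgu])
    induction z using Sym2.ind with | h i j => ?_
    exact (mul_le_mul_of_nonneg_left (hx i j) (norm_nonneg _)).trans (hg s(i, j))
  have hφu : ∀ i j k, φ k (pairSum u s(i, j)) =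
      (if i = k then 1 else 0) + if j = k then 1 else 0 := by
    simp [hφ]
  have hind : LinearIndependent 𝕜 fun z => tensorFunctional 𝕜 (g z) (pairSum x z) := by
    refine linearIndependent_tensorFunctional_of_sym2 (fun k => (φ k).comp T) u g (pairSum x)
      ?_ ?_
    · intro z k l h
      rw [ContinuousLinearMap.comp_apply, hTx'] at h
      refine ⟨?_, not_not.1 fun hl => right_ne_zero_of_mul h (hg0 z l hl)⟩
      induction z using Sym2.ind with | h i j => ?_
      have hk := left_ne_zero_of_mul h
      rw [hφu] at hk
      rw [Sym2.mem_iff]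
      by_contra! hne
      rw [if_neg (Ne.symm hne.1), if_neg (Ne.symm hne.2), add_zero] at hk
      exact hk rfl
    · intro i j
      have hsum : g s(i, j) (u i) + g s(i, j) (u j) = 1 := by simpa using hgu s(i, j)
      simp only [ContinuousLinearMap.comp_apply, hTx', hφu, ↓reduceIte]
      rcases eq_or_ne i j with rfl | hij
      · convert two_ne_zero (α := 𝕜) using 1
        simp only [↓reduceIte]
        linear_combination 2 * hsum
      · convert one_ne_zero (α := 𝕜) using 1
        simp only [if_neg hij, if_neg hij.symm]
        linear_combination hsum
  simpa [Sym2.card] using hind.card_le_rank_span hF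

end IsStrongAuerbachBasis

end

theorem kSmooth_lower_bound_strong_auerbach_general
    {𝕜 X Y : Type*} [RCLike 𝕜]
    [NormedAddCommGroup X] [NormedSpace 𝕜 X]
    [NormedAddCommGroup Y] [NormedSpace 𝕜 Y]
    (T : X →L[𝕜] Y) (hT : ‖T‖ = 1)
    (X₀ : Submodule 𝕜 X) {n : ℕ}
    (hdim : Module.finrank 𝕜 X₀ = n)
    (hMT : normAttainSet 𝕜 T = {x : X | x ∈ X₀ ∧ ‖x‖ = 1})
    (hauer : ∃ (d : ℕ) (u : Fin d → Y),
      IsStrongAuerbachBasis 𝕜 u (X₀.map (T : X →ₗ[𝕜] Y))) :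
    ((n + 1).choose 2 : Cardinal) ≤
      Module.rank 𝕜 ↥(Submodule.span 𝕜 (suppFunctionals 𝕜 T)) := by
  obtain ⟨d, u, hu⟩ := hauer
  have hiso : ∀ x ∈ X₀, ‖T x‖ = ‖x‖ := fun x hx => by
    rw [norm_apply_eq_of_sphere_subset_normAttainSet (fun x hx h1 => hMT ▸ ⟨hx, h1⟩) hx, hT,
      one_mul]
  choose x hxX₀ hTx using fun i => Submodule.mem_map.1 (hu.1 i)
  simp only [ContinuousLinearMap.coe_coe] at hTx
  obtain rfl : d = n := by
    rw [← hdim, ← hu.finrank_eq, finrank_map_eq_of_forall_norm_apply_eq hiso]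
  exact hu.choose_two_le_rank_span_suppFunctionals hT.le hTx fun i j => by
    rw [← hiso _ (add_mem (hxX₀ i) (hxX₀ j)), map_add, hTx, hTx]

theorem kSmooth_lower_bound_strong_auerbach
    {𝕜 X Y : Type*} [RCLike 𝕜]
    [NormedAddCommGroup X] [NormedSpace 𝕜 X] [CompleteSpace X]
    [NormedAddCommGroup Y] [NormedSpace 𝕜 Y] [CompleteSpace Y]
    (hXsc : StrictlyConvexSp 𝕜 X) (hXsm : SmoothSp 𝕜 X) (hXrefl : ReflexiveSp 𝕜 X)
    (hYsc : StrictlyConvexSp 𝕜 Y) (hYsm : SmoothSp 𝕜 Y) (hYrefl : ReflexiveSp 𝕜 Y)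
    (T : X →L[𝕜] Y) (hT : ‖T‖ = 1)
    (hMideal : IsMIdeal 𝕜 (compactOperators 𝕜 X Y))
    (hdist : Metric.infDist T (compactOperators 𝕜 X Y : Set (X →L[𝕜] Y)) < 1)
    (X₀ : Submodule 𝕜 X) [FiniteDimensional 𝕜 X₀] {n : ℕ}
    (hdim : Module.finrank 𝕜 X₀ = n)
    (hMT : normAttainSet 𝕜 T = {x : X | x ∈ X₀ ∧ ‖x‖ = 1})
    (hco : Coproximinal 𝕜 (X₀.map (T : X →ₗ[𝕜] Y)))
    (hauer : ∃ (d : ℕ) (u : Fin d → Y),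
      IsStrongAuerbachBasis 𝕜 u (X₀.map (T : X →ₗ[𝕜] Y))) :
    ((n + 1).choose 2 : Cardinal) ≤
      Module.rank 𝕜 ↥(Submodule.span 𝕜 (suppFunctionals 𝕜 T)) :=
  kSmooth_lower_bound_strong_auerbach_general T hT X₀ hdim hMT hauer
end
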